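/- arXiv:1802.01795 — 5 statements merged into one kernel-verified Lean document; each statement's English description precedes it below -/
import Mathlib

section
/- The power function is Diophantine: there exist a number k ∈ ℕ and a polynomial p with integer coefficients in k+3 variables such that for all natural numbers x, y, w, one has x^y = w if and only if there exist natural numbers z₁, …, z_k with p(x, y, w, z₁, …, z_k) = 0. Equivalently, the set {(x, y, w) ∈ ℕ³ | x^y = w} is Diophantine. -/
/-- The power function is Diophantine: the set `{(x, y, w) ∈ ℕ³ | x ^ y = w}` is
Diophantine. -/
theorem pow_is_diophantine : Dioph {v : Fin 3 → ℕ | v 0 ^ v 1 = v 2} :=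
  Dioph.eq_dioph (Dioph.pow_dioph (Dioph.proj_dioph 0) (Dioph.proj_dioph 1)) (Dioph.proj_dioph 2)
end

section
/- Solution of Pell's equation: let a > 1 be a natural number and d = a² − 1. If b ∈ ℤ√d satisfies 1 ≤ b and N(b) = 1, then there exists n ∈ ℕ such that b = (a + √d)^n. -/
theorem Pell.isPell_iff_norm_eq_one {d : ℤ} {b : ℤ√d} : Pell.IsPell b ↔ b.norm = 1 := by
  rw [Pell.isPell_norm, ← Zsqrtd.norm_eq_mul_conj, Int.cast_eq_one]

theorem Pell.pellZd_eq_pow {a : ℕ} (a1 : 1 < a) (n : ℕ) :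
    Pell.pellZd a1 n = (⟨a, 1⟩ : ℤ√((a * a - 1 : ℕ) : ℤ)) ^ n := by
  induction n with
  | zero => rfl
  -- `rfl` unfolds the private `Pell.d a1` to `a * a - 1`.
  | succ k ih => rw [Pell.pellZd_succ, ih, pow_succ]; rfl

/-- Solution of Pell's equation: for `a > 1` and `d = a² - 1`, every `b ∈ ℤ√d` with
`1 ≤ b` and norm `1` is a power of the fundamental solution `a + √d`. -/
theorem pell_solution {a : ℕ} (a1 : 1 < a) (b : ℤ√((a ^ 2 - 1 : ℕ) : ℤ))
    (hb : 1 ≤ b) (hnorm : b.norm = 1) :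
    ∃ n : ℕ, b = (⟨(a : ℤ), 1⟩ : ℤ√((a ^ 2 - 1 : ℕ) : ℤ)) ^ n := by
  -- Mathlib's Pell theory lives in `ℤ√(a * a - 1)`.
  revert b
  rw [sq]
  intro b hb hnorm
  obtain ⟨n, rfl⟩ := Pell.eq_pellZd a1 b hb (Pell.isPell_iff_norm_eq_one.mpr hnorm)
  exact ⟨n, Pell.pellZd_eq_pow a1 n⟩
end

section
/- Matiyasevič's key equivalence: let a, k, x, y ∈ ℕ with a > 1, and let d = a² − 1. Then x = x_k(a) and y = y_k(a) hold if and only if: k ≤ y, and either (x = 1 and y = 0), or there exist u, v, s, t, b ∈ ℕ such that x² − d·y² = 1, u² − d·v² = 1, s² − (b² − 1)·t² = 1, b > 1, b ≡ 1 (mod 4y), b ≡ a (mod u), v > 0, y² ∣ v, s ≡ x (mod u), and t ≡ k (mod 4y). -/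
lemma pell_nat_int_iff (x y e : ℕ) :
    x * x - e * y * y = 1 ↔ (x : ℤ) ^ 2 - (e : ℤ) * (y : ℤ) ^ 2 = 1 := by
  constructor
  · intro h
    have hx : x * x = e * y * y + 1 := by omega
    have h2 : ((x : ℤ) * x) = e * y * y + 1 := by exact_mod_cast hx
    ring_nf; ring_nf at h2; linarith
  · intro h
    have : (x : ℤ) * x = e * y * y + 1 := by ring_nf; ring_nf at h; linarith
    have hx : x * x = e * y * y + 1 := by exact_mod_cast this
    omega

/-- Matiyasevič's key equivalence for the Pell sequences `xₙ(a)`, `yₙ(a)` with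
`a > 1` and `d = a² - 1`. -/
theorem matiyasevic_equivalence {a : ℕ} (a1 : 1 < a) (k x y : ℕ) :
    (x = Pell.xn a1 k ∧ y = Pell.yn a1 k) ↔
      k ≤ y ∧
        ((x = 1 ∧ y = 0) ∨
          ∃ u v s t b : ℕ,
            (x : ℤ) ^ 2 - ((a : ℤ) ^ 2 - 1) * (y : ℤ) ^ 2 = 1 ∧
            (u : ℤ) ^ 2 - ((a : ℤ) ^ 2 - 1) * (v : ℤ) ^ 2 = 1 ∧
            (s : ℤ) ^ 2 - ((b : ℤ) ^ 2 - 1) * (t : ℤ) ^ 2 = 1 ∧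
            1 < b ∧ b ≡ 1 [MOD 4 * y] ∧ b ≡ a [MOD u] ∧
            0 < v ∧ y ^ 2 ∣ v ∧ s ≡ x [MOD u] ∧ t ≡ k [MOD 4 * y]) := by
  have hd : ((a * a - 1 : ℕ) : ℤ) = (a : ℤ) ^ 2 - 1 := by
    have : 1 ≤ a * a := Nat.one_le_iff_ne_zero.2 (by positivity)
    push_cast [this]
    ring
  have key := @Pell.matiyasevic a k x y
  constructor
  · rintro ⟨hx, hy⟩
    obtain ⟨-, hky, h⟩ := key.1 ⟨a1, hx.symm, hy.symm⟩
    refine ⟨hky, ?_⟩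
    rcases h with h | ⟨u, v, s, t, b, h1, h2, h3, hb, hb1, hba, hv, hyv, hsx, htk⟩
    · exact Or.inl h
    · have hbd : ((b * b - 1 : ℕ) : ℤ) = (b : ℤ) ^ 2 - 1 := by
        have : 1 ≤ b * b := Nat.one_le_iff_ne_zero.2 (by positivity)
        push_cast [this]; ring
      refine Or.inr ⟨u, v, s, t, b, ?_, ?_, ?_, hb, hb1, hba, hv, by rwa [sq], hsx, htk⟩
      · have := (pell_nat_int_iff x y (a * a - 1)).1 h1; rwa [hd] at this
      · have := (pell_nat_int_iff u v (a * a - 1)).1 h2; rwa [hd] at this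
      · have := (pell_nat_int_iff s t (b * b - 1)).1 h3; rwa [hbd] at this
  · rintro ⟨hky, h⟩
    have : ∃ a1 : 1 < a, Pell.xn a1 k = x ∧ Pell.yn a1 k = y := by
      apply key.2
      refine ⟨a1, hky, ?_⟩
      rcases h with h | ⟨u, v, s, t, b, h1, h2, h3, hb, hb1, hba, hv, hyv, hsx, htk⟩
      · exact Or.inl h
      · have hbd : ((b * b - 1 : ℕ) : ℤ) = (b : ℤ) ^ 2 - 1 := by
          have : 1 ≤ b * b := Nat.one_le_iff_ne_zero.2 (by positivity)
          push_cast [this]; ring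
        refine Or.inr ⟨u, v, s, t, b, ?_, ?_, ?_, hb, hb1, hba, hv, by rwa [sq] at hyv, hsx, htk⟩
        · exact (pell_nat_int_iff x y (a * a - 1)).2 (by rw [hd]; exact h1)
        · exact (pell_nat_int_iff u v (a * a - 1)).2 (by rw [hd]; exact h2)
        · exact (pell_nat_int_iff s t (b * b - 1)).2 (by rw [hbd]; exact h3)
    obtain ⟨_, hx, hy⟩ := this
    exact ⟨hx.symm, hy.symm⟩
end

section
/- No Pell solution lies strictly between 1 and the fundamental solution: for a natural number a > 1 with d = a² − 1, there is no element w ∈ ℤ√d with N(w) = 1 and 1 < w < a + √d. -/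
/-- No Pell solution lies strictly between `1` and the fundamental solution `a + √d`,
where `d = a² - 1`. -/
theorem no_pell_solution_between_one_and_fundamental {a : ℕ} (a1 : 1 < a) :
    ¬ ∃ w : ℤ√((a ^ 2 - 1 : ℕ) : ℤ),
        w.norm = 1 ∧ 1 < w ∧ w < (⟨(a : ℤ), 1⟩ : ℤ√((a ^ 2 - 1 : ℕ) : ℤ)) := by
  rw [sq]
  rintro ⟨w, hn, h1, h2⟩
  have hp : Pell.IsPell w := by
    rw [Pell.isPell_norm, ← Zsqrtd.norm_eq_mul_conj, hn, Int.cast_one]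
  obtain ⟨n, rfl⟩ := Pell.eq_pellZd a1 w (le_of_lt h1) hp
  match n with
  | 0 => exact lt_irrefl _ h1
  | 1 =>
    have : Pell.pellZd a1 1 = ⟨(a : ℤ), 1⟩ := by
      simp [Pell.pellZd, Pell.xn_one, Pell.yn_one]
    rw [this] at h2
    exact lt_irrefl _ h2
  | (n + 2) =>
    have hx : Pell.xn a1 1 ≤ Pell.xn a1 (n + 2) :=
      (Pell.strictMono_x a1).monotone (by omega)
    have hy : Pell.yn a1 1 ≤ Pell.yn a1 (n + 2) :=
      (Pell.strictMono_y a1).monotone (by omega)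
    rw [Pell.xn_one] at hx
    rw [Pell.yn_one] at hy
    have : (⟨(a : ℤ), 1⟩ : ℤ√_) ≤ Pell.pellZd a1 (n + 2) :=
      Zsqrtd.le_of_le_le (by exact_mod_cast hx) (by exact_mod_cast hy)
    exact absurd h2 (not_lt.2 this)
end

section
/- Square divisibility law for the Pell y-sequence: for every natural number a > 1 and all n, m ∈ ℕ with n > 0, yₙ(a)² divides y_m(a) if and only if n·yₙ(a) divides m. -/
open Pell

/-- Square divisibility law for the Pell `y`-sequence: for `n > 0`,
`yₙ(a)² ∣ y_m(a) ↔ n·yₙ(a) ∣ m`. -/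
theorem pell_ysq_dvd_iff {a : ℕ} (a1 : 1 < a) (n m : ℕ) (npos : 0 < n) :
    Pell.yn a1 n ^ 2 ∣ Pell.yn a1 m ↔ n * Pell.yn a1 n ∣ m := by
  rw [pow_two]
  constructor
  · intro h
    have nt : n ∣ m := (y_dvd_iff a1 n m).1 <| dvd_of_mul_left_dvd h
    obtain ⟨k, ke⟩ := nt
    have hdvd : yn a1 n ∣ k * xn a1 n ^ (k - 1) :=
      Nat.dvd_of_mul_dvd_mul_right (strictMono_y a1 npos) <|
        Nat.modEq_zero_iff_dvd.1 <| by
          have xm := (xy_modEq_yn a1 n k).right; rw [← ke] at xm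
          exact (xm.of_dvd <| by simp [_root_.pow_succ]).symm.trans h.modEq_zero_nat
    have hk : yn a1 n ∣ k :=
      ((xy_coprime a1 n).pow_left _).symm.dvd_of_dvd_mul_right hdvd
    rw [ke]
    exact mul_dvd_mul_left n hk
  · intro h
    exact (ysq_dvd_yy a1 n).trans <| (y_dvd_iff a1 _ m).2 h
end
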